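/- arXiv:1812.03454 — 2 statements merged into one kernel-verified Lean document; each statement's English description precedes it below -/
import Mathlib

section
/- Every N×N complex matrix A with ‖A‖ ≤ 1 can be written as A = (1/2)U₀ + (1/2)U₁ where U₀ and U₁ are unitary matrices. -/
/-!
Polar decomposition: `‖T x‖ = ‖|T| x‖` for all `x`, so `|T| x ↦ T x` is a well-defined isometry
on the range of `|T|`, which in finite dimension extends to a unitary `V` with `T = V |T|`. Since
`‖|T|‖ = ‖T‖ ≤ 1`, the self-adjoint contraction `|T|` is the real part of the unitary
`u = |T| + i √(1 - |T|²)`, and therefore `T = ½ V u + ½ V u⋆`.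
-/

open scoped Matrix.Norms.L2Operator ComplexStarModule

theorem IsSelfAdjoint.exists_mem_unitary_eq_half_smul_add_star {A : Type*} [CStarAlgebra A]
    {a : A} (ha : IsSelfAdjoint a) (ha_norm : ‖a‖ ≤ 1) :
    ∃ u ∈ unitary A, a = (1 / 2 : ℂ) • u + (1 / 2 : ℂ) • star u := by
  -- `CFC.sqrt` needs a star order; the spectral one is always available.
  let _ := CStarAlgebra.spectralOrder A
  let _ := CStarAlgebra.spectralOrderedRing A
  obtain ⟨u, hu⟩ : ∃ u : unitary A, (ℜ (u : A) : A) = a :=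
    ⟨_, congrArg Subtype.val (selfAdjoint.realPart_unitarySelfAddISMul ⟨a, ha⟩ ha_norm)⟩
  refine ⟨u, u.2, ?_⟩
  rw [← hu, realPart_apply_coe, ← smul_add, ← Complex.coe_smul]
  norm_num

section FiniteDimensional

variable {𝕜 E F : Type*} [RCLike 𝕜] [AddCommGroup E] [Module 𝕜 E]
  [NormedAddCommGroup F] [InnerProductSpace 𝕜 F] [FiniteDimensional 𝕜 F]

theorem LinearMap.exists_linearIsometry_comp_eq_of_norm_eq {T P : E →ₗ[𝕜] F}
    (h : ∀ x, ‖T x‖ = ‖P x‖) : ∃ V : F →ₗᵢ[𝕜] F, ∀ x, V (P x) = T x := by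
  have hker : LinearMap.ker P ≤ LinearMap.ker T := fun x hx => by
    rw [LinearMap.mem_ker, ← norm_eq_zero, h, hx, norm_zero]
  let L := (LinearMap.ker P).liftQ T hker ∘ₗ P.quotKerEquivRange.symm.toLinearMap
  have hL : ∀ x, L ⟨P x, LinearMap.mem_range_self P x⟩ = T x := fun x => by
    rw [LinearMap.comp_apply, LinearEquiv.coe_coe, quotKerEquivRange_symm_apply_image]
    exact Submodule.liftQ_apply _ _ _
  let LI : LinearMap.range P →ₗᵢ[𝕜] F := ⟨L, by rintro ⟨-, x, rfl⟩; rw [hL, h, Submodule.coe_norm]⟩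
  refine ⟨LI.extend, fun x => ?_⟩
  exact (LI.extend_apply ⟨P x, LinearMap.mem_range_self P x⟩).trans (hL x)

theorem ContinuousLinearMap.exists_mem_unitary_mul_eq_of_star_mul_self_eq [CompleteSpace F]
    {T P : F →L[𝕜] F} (h : star P * P = star T * T) :
    ∃ V ∈ unitary (F →L[𝕜] F), T = V * P := by
  have hnorm : ∀ x, ‖T x‖ = ‖P x‖ := fun x => by
    rw [← sq_eq_sq₀ (norm_nonneg _) (norm_nonneg _), apply_norm_sq_eq_inner_adjoint_left,
      apply_norm_sq_eq_inner_adjoint_left, ← star_eq_adjoint, ← star_eq_adjoint, ← mul_def,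
      ← mul_def, h]
  obtain ⟨V, hV⟩ := LinearMap.exists_linearIsometry_comp_eq_of_norm_eq (T := (T : F →ₗ[𝕜] F))
    (P := (P : F →ₗ[𝕜] F)) hnorm
  refine ⟨Unitary.linearIsometryEquiv.symm (V.toLinearIsometryEquiv rfl), SetLike.coe_mem _, ?_⟩
  ext x
  exact (hV x).symm

end FiniteDimensional

theorem ContinuousLinearMap.exists_mem_unitary_eq_half_smul_add_half_smul {H : Type*}
    [NormedAddCommGroup H] [InnerProductSpace ℂ H] [FiniteDimensional ℂ H]
    (T : H →L[ℂ] H) (hT : ‖T‖ ≤ 1) :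
    ∃ U₀ ∈ unitary (H →L[ℂ] H), ∃ U₁ ∈ unitary (H →L[ℂ] H),
      T = (1 / 2 : ℂ) • U₀ + (1 / 2 : ℂ) • U₁ := by
  have habs : IsSelfAdjoint (CFC.abs T) := (CFC.abs_nonneg T).isSelfAdjoint
  obtain ⟨V, hV, hpolar⟩ := exists_mem_unitary_mul_eq_of_star_mul_self_eq (T := T)
    (P := CFC.abs T) (by rw [habs.star_eq, CFC.abs_mul_abs])
  obtain ⟨u, hu, hhalf⟩ := habs.exists_mem_unitary_eq_half_smul_add_star (by rwa [CFC.norm_abs])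
  refine ⟨V * u, mul_mem hV hu, V * star u, mul_mem hV (Unitary.star_mem hu), ?_⟩
  rw [hpolar, hhalf, mul_add, mul_smul_comm, mul_smul_comm]

theorem contraction_avg_two_unitaries {N : ℕ}
    (A : Matrix (Fin N) (Fin N) ℂ) (hA : ‖A‖ ≤ 1) :
    ∃ U₀ U₁ : Matrix (Fin N) (Fin N) ℂ,
      U₀ ∈ Matrix.unitaryGroup (Fin N) ℂ ∧
      U₁ ∈ Matrix.unitaryGroup (Fin N) ℂ ∧
      A = (1 / 2 : ℂ) • U₀ + (1 / 2 : ℂ) • U₁ := by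
  let φ := Matrix.toEuclideanCLM (n := Fin N) (𝕜 := ℂ)
  obtain ⟨U₀, hU₀, U₁, hU₁, hφA⟩ := (φ A).exists_mem_unitary_eq_half_smul_add_half_smul hA
  refine ⟨φ.symm U₀, φ.symm U₁, Unitary.map_mem φ.symm hU₀, Unitary.map_mem φ.symm hU₁, ?_⟩
  rw [← φ.symm_apply_apply A, hφA, map_add, map_smul, map_smul]
end

section
/- For every natural number n, Lⁿ = [[T_n(H), -(I-H²)^{1/2}·U_{n-1}(H)], [(I-H²)^{1/2}·U_{n-1}(H), T_n(H)]], where T_n and U_{n-1} are the Chebyshev polynomials of the first and second kind. -/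
open Matrix
open scoped Matrix.Norms.L2Operator ComplexOrder

/-- The positive semidefinite square root of a positive semidefinite matrix
(the definition of `Matrix.PosSemidef.sqrt` in Mathlib of December 2024, since removed). -/
noncomputable def Matrix.PosSemidef.sqrt {n : Type*} [Fintype n] [DecidableEq n] {𝕜 : Type*}
    [RCLike 𝕜] {A : Matrix n n 𝕜} (hA : A.PosSemidef) : Matrix n n 𝕜 :=
  hA.1.eigenvectorUnitary.1 * diagonal ((↑) ∘ (√·) ∘ hA.1.eigenvalues) *
    (star hA.1.eigenvectorUnitary : Matrix n n 𝕜)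

/-! `L` behaves like a rotation matrix with cosine `H` and sine `S = (1 - H²)^{1/2}`: since `S`
commutes with `H` and `S² = 1 - H²`, multiplying `Lⁿ` by `L` on the left reproduces the Chebyshev
recurrences `T_{n+1} = X T_n - (1 - X²) U_{n-1}` and `U_n = X U_{n-1} + T_n`. -/

open Polynomial

namespace Matrix.PosSemidef

variable {m 𝕜 : Type*} [Fintype m] [DecidableEq m] [RCLike 𝕜] {A : Matrix m m 𝕜}

theorem sqrt_eq_cfc (hA : A.PosSemidef) : hA.sqrt = cfc Real.sqrt A := by
  rw [hA.1.cfc_eq, IsHermitian.cfc, Unitary.conjStarAlgAut_apply]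
  rfl

theorem sqrt_mul_self (hA : A.PosSemidef) : hA.sqrt * hA.sqrt = A := by
  rw [hA.sqrt_eq_cfc, ← cfc_mul Real.sqrt Real.sqrt A]
  conv_rhs => rw [← cfc_id' ℝ A hA.1]
  refine cfc_congr fun x hx => ?_
  rw [hA.1.spectrum_real_eq_range_eigenvalues] at hx
  obtain ⟨i, rfl⟩ := hx
  exact Real.mul_self_sqrt (hA.eigenvalues_nonneg i)

theorem commute_sqrt {B : Matrix m m 𝕜} (hA : A.PosSemidef) (hAB : Commute A B) :
    Commute hA.sqrt B :=
  hA.sqrt_eq_cfc ▸ hAB.cfc_real _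

end Matrix.PosSemidef

open Polynomial.Chebyshev in
theorem fromBlocks_pow_eq_chebyshev {m R : Type*} [Fintype m] [DecidableEq m] [CommRing R]
    {H S : Matrix m m R} (hSH : Commute S H)
    (hS : S * S = 1 - H ^ 2) (n : ℕ) :
    fromBlocks H (-S) S H ^ n =
      fromBlocks (aeval H (T R n)) (-(S * aeval H (U R (n - 1))))
        (S * aeval H (U R (n - 1))) (aeval H (T R n)) := by
  induction n with
  | zero => simp [fromBlocks_one]
  | succ n ih =>
    have hT : aeval H (T R (n + 1 : ℕ)) =
        H * aeval H (T R n) - S * (S * aeval H (U R (n - 1))) := by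
      have h := T_eq_X_mul_T_sub_pol_U R ((n : ℤ) - 1)
      rw [show (n : ℤ) - 1 + 2 = n + 1 by ring, sub_add_cancel] at h
      rw [← mul_assoc, hS]
      simp [h]
    have hU : S * aeval H (U R ((n + 1 : ℕ) - 1 : ℤ)) =
        H * (S * aeval H (U R (n - 1))) + S * aeval H (T R n) := by
      have h := U_eq_X_mul_U_add_T R ((n : ℤ) - 1)
      rw [sub_add_cancel] at h
      rw [← mul_assoc, ← hSH.eq, mul_assoc, ← mul_add]
      simp [h]
    rw [pow_succ', ih, fromBlocks_multiply, hT, hU]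
    congr 1 <;> noncomm_ring

theorem block_matrix_L_pow_chebyshev_general {N : ℕ}
    (H : Matrix (Fin N) (Fin N) ℂ)
    (hpsd : (1 - H ^ 2).PosSemidef) (n : ℕ) :
    Matrix.fromBlocks H (-hpsd.sqrt) hpsd.sqrt H ^ n =
      Matrix.fromBlocks
        (Polynomial.aeval H (Polynomial.Chebyshev.T ℂ (n : ℤ)))
        (-(hpsd.sqrt * Polynomial.aeval H (Polynomial.Chebyshev.U ℂ ((n : ℤ) - 1))))
        (hpsd.sqrt * Polynomial.aeval H (Polynomial.Chebyshev.U ℂ ((n : ℤ) - 1)))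
        (Polynomial.aeval H (Polynomial.Chebyshev.T ℂ (n : ℤ))) :=
  fromBlocks_pow_eq_chebyshev
    (hpsd.commute_sqrt ((Commute.one_left H).sub_left (Commute.pow_self H 2)))
    hpsd.sqrt_mul_self n

theorem block_matrix_L_pow_chebyshev {N : ℕ}
    (H : Matrix (Fin N) (Fin N) ℂ) (hH : H.IsHermitian) (hnorm : ‖H‖ ≤ 1)
    (hpsd : (1 - H ^ 2).PosSemidef) (n : ℕ) :
    Matrix.fromBlocks H (-hpsd.sqrt) hpsd.sqrt H ^ n =
      Matrix.fromBlocks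
        (Polynomial.aeval H (Polynomial.Chebyshev.T ℂ (n : ℤ)))
        (-(hpsd.sqrt * Polynomial.aeval H (Polynomial.Chebyshev.U ℂ ((n : ℤ) - 1))))
        (hpsd.sqrt * Polynomial.aeval H (Polynomial.Chebyshev.U ℂ ((n : ℤ) - 1)))
        (Polynomial.aeval H (Polynomial.Chebyshev.T ℂ (n : ℤ))) :=
  block_matrix_L_pow_chebyshev_general H hpsd n
end
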